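/- Let a̲ ∈ [0,1) and A = [a̲,1]. Let u : A → ℝ be twice continuously differentiable with u' > 0 and u'' < 0 on A, and set M = max over a ∈ A of |u''(a)|. Let c₀ = 1 − e^{−rΔ} with r, Δ > 0, let C ≥ 0, I_k ≥ 0, I_u ≥ 0 be constants, and let a_I ∈ A. Define g(x) = c₀·u(x) − C·(a_I·I_k + x·I_u)·x for x ∈ A, and for a fixed a* ∈ A define f(x) = c₀·u(x) − C·(a_I·I_k + a*·I_u)·x. Assume a* maximizes f over A, let a† be the unique maximizer of the strictly concave function g over A, and assume both are interior: a̲ < a† and a* < 1. Then c₀·M·(a* − a†) ≥ C·(2a† − a*)·I_u. -/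

import Mathlib

/-!
Both first-order conditions are one-sided: `a*` could only move to the right inside `A`, so
`c₀ u'(a*) ≤ C (a_I I_k + a* I_u)`, and `a†` only to the left, so
`c₀ u'(a†) ≥ C (a_I I_k + 2 a† I_u)`. Subtracting, `c₀ (u'(a†) - u'(a*)) ≥ C I_u (2a† - a*)`.
If `a† > a*`, the left side is negative because `u'` is strictly decreasing, while the right
side is nonnegative; hence `a† ≤ a*`, and the mean value theorem bounds
`u'(a†) - u'(a*)` by `M (a* - a†)`.
-/

open Set

section FirstOrderConditions

variable {s : Set ℝ} {F : ℝ → ℝ} {F' a b : ℝ}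

theorem HasDerivWithinAt.nonpos_of_isLocalMaxOn_of_lt (hF : HasDerivWithinAt F F' s a)
    (h : IsLocalMaxOn F s a) (hs : Convex ℝ s) (ha : a ∈ s) (hb : b ∈ s)
    (hab : a < b) : F' ≤ 0 := by
  have hcone := sub_mem_posTangentConeAt_of_segment_subset (hs.segment_subset ha hb)
  have := h.hasFDerivWithinAt_nonpos hF.hasFDerivWithinAt hcone
  simp only [ContinuousLinearMap.toSpanSingleton_apply, smul_eq_mul] at this
  nlinarith

theorem HasDerivWithinAt.nonneg_of_isLocalMaxOn_of_lt (hF : HasDerivWithinAt F F' s a)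
    (h : IsLocalMaxOn F s a) (hs : Convex ℝ s) (ha : a ∈ s) (hb : b ∈ s)
    (hba : b < a) : 0 ≤ F' := by
  have hcone := sub_mem_posTangentConeAt_of_segment_subset (hs.segment_subset ha hb)
  have := h.hasFDerivWithinAt_nonpos hF.hasFDerivWithinAt hcone
  simp only [ContinuousLinearMap.toSpanSingleton_apply, smul_eq_mul] at this
  nlinarith

end FirstOrderConditions

section Derivatives

variable {s : Set ℝ} {f f' : ℝ → ℝ} {x y a v c k C p q M : ℝ}

theorem HasDerivWithinAt.const_mul_sub_mul_id (hf : HasDerivWithinAt f v s a) :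
    HasDerivWithinAt (fun x => c * f x - k * x) (c * v - k) s a :=
  (hf.const_mul c).fun_sub ((hasDerivWithinAt_id a s).const_mul k) |>.congr_deriv (by ring)

theorem HasDerivWithinAt.const_mul_sub_quadratic (hf : HasDerivWithinAt f v s a) :
    HasDerivWithinAt (fun x => c * f x - C * (p + x*q) * x) (c * v - C * (p + 2*a*q)) s a := by
  have hid : HasDerivWithinAt (fun x : ℝ => x) 1 s a := hasDerivWithinAt_id a s
  exact (hf.const_mul c).fun_sub ((((hid.mul_const q).const_add p).const_mul C).fun_mul hid)
    |>.congr_deriv (by ring)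

theorem strictAntiOn_of_hasDerivWithinAt_neg_of_convex (hs : Convex ℝ s)
    (hf : ∀ x ∈ s, HasDerivWithinAt f (f' x) s x) (hf' : ∀ x ∈ s, f' x < 0) :
    StrictAntiOn f s :=
  strictAntiOn_of_hasDerivWithinAt_neg hs (fun x hx => (hf x hx).continuousWithinAt)
    (fun x hx => (hf x (interior_subset hx)).mono interior_subset)
    (fun x hx => hf' x (interior_subset hx))

theorem sub_le_mul_sub_of_abs_hasDerivWithinAt_le (hs : Convex ℝ s)
    (hf : ∀ x ∈ s, HasDerivWithinAt f (f' x) s x) (bound : ∀ x ∈ s, |f' x| ≤ M)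
    (hx : x ∈ s) (hy : y ∈ s) (hxy : x ≤ y) : f x - f y ≤ M * (y - x) := by
  have := hs.norm_image_sub_le_of_norm_hasDerivWithin_le hf bound hx hy
  rw [Real.norm_eq_abs, Real.norm_eq_abs, abs_sub_comm, abs_of_nonneg (sub_nonneg.mpr hxy)]
    at this
  exact (le_abs_self _).trans this

end Derivatives

theorem stmt_13_general (a0 : ℝ) (ha0 : a0 ∈ Set.Ico (0:ℝ) 1)
    (u u' u'' : ℝ → ℝ)
    (hderiv : ∀ x ∈ Set.Icc a0 1, HasDerivWithinAt u (u' x) (Set.Icc a0 1) x)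
    (hderiv2 : ∀ x ∈ Set.Icc a0 1, HasDerivWithinAt u' (u'' x) (Set.Icc a0 1) x)
    (hu''neg : ∀ x ∈ Set.Icc a0 1, u'' x < 0)
    (M : ℝ) (hM : IsGreatest ((fun a => |u'' a|) '' Set.Icc a0 1) M)
    (r Δ C Ik Iu aI : ℝ) (hr : 0 < r) (hΔ : 0 < Δ) (hC : 0 ≤ C)
    (hIu : 0 ≤ Iu)
    (astar adag : ℝ) (hastar : astar ∈ Set.Icc a0 1) (hadag : adag ∈ Set.Icc a0 1)
    -- `a*` maximizes `f(x) = c₀ u(x) - C(a_I I_k + a* I_u)x` over `A`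
    (hf : ∀ x ∈ Set.Icc a0 1,
      (1 - Real.exp (-(r*Δ))) * u x - C * (aI*Ik + astar*Iu) * x ≤
      (1 - Real.exp (-(r*Δ))) * u astar - C * (aI*Ik + astar*Iu) * astar)
    -- `a†` maximizes `g(x) = c₀ u(x) - C(a_I I_k + x I_u)x` over `A`
    (hg : ∀ x ∈ Set.Icc a0 1,
      (1 - Real.exp (-(r*Δ))) * u x - C * (aI*Ik + x*Iu) * x ≤
      (1 - Real.exp (-(r*Δ))) * u adag - C * (aI*Ik + adag*Iu) * adag)
    -- interiority
    (h_int1 : a0 < adag) (h_int2 : astar < 1) :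
    C * (2*adag - astar) * Iu ≤ (1 - Real.exp (-(r*Δ))) * M * (astar - adag) := by
  set c₀ := 1 - Real.exp (-(r*Δ))
  have hs : Convex ℝ (Icc a0 1) := convex_Icc a0 1
  have hc₀ : 0 < c₀ := sub_pos.mpr (Real.exp_lt_one_iff.mpr (by nlinarith))
  have hfoc_f : c₀ * u' astar - C * (aI*Ik + astar*Iu) ≤ 0 :=
    (hderiv astar hastar).const_mul_sub_mul_id.nonpos_of_isLocalMaxOn_of_lt (IsMaxOn.localize hf)
      hs hastar (right_mem_Icc.mpr ha0.2.le) h_int2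
  have hfoc_g : 0 ≤ c₀ * u' adag - C * (aI*Ik + 2*adag*Iu) :=
    (hderiv adag hadag).const_mul_sub_quadratic.nonneg_of_isLocalMaxOn_of_lt (IsMaxOn.localize hg)
      hs hadag (left_mem_Icc.mpr ha0.2.le) h_int1
  have hgap : C * (2*adag - astar) * Iu ≤ c₀ * (u' adag - u' astar) := by linarith
  have hle : adag ≤ astar := by
    by_contra! hlt
    have hu' : u' adag < u' astar :=
      strictAntiOn_of_hasDerivWithinAt_neg_of_convex hs hderiv2 hu''neg hastar hadag hlt
    have : 0 ≤ C * (2*adag - astar) * Iu :=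
      mul_nonneg (mul_nonneg hC (by linarith [ha0.1])) hIu
    nlinarith
  have hlip : u' adag - u' astar ≤ M * (astar - adag) :=
    sub_le_mul_sub_of_abs_hasDerivWithinAt_le hs hderiv2 (fun x hx => hM.2 ⟨x, hx, rfl⟩)
      hadag hastar hle
  calc C * (2*adag - astar) * Iu ≤ c₀ * (u' adag - u' astar) := hgap
    _ ≤ c₀ * (M * (astar - adag)) := mul_le_mul_of_nonneg_left hlip hc₀.le
    _ = c₀ * M * (astar - adag) := by ring

/-- Lower bound on the gap between equilibrium and static efficient actions when
both are interior: `c₀ M (a* - a†) ≥ C (2a† - a*) I_u`, where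
`M = max_{a ∈ A} |u''(a)|`. -/
theorem stmt_13 (a0 : ℝ) (ha0 : a0 ∈ Set.Ico (0:ℝ) 1)
    (u u' u'' : ℝ → ℝ)
    (hderiv : ∀ x ∈ Set.Icc a0 1, HasDerivWithinAt u (u' x) (Set.Icc a0 1) x)
    (hderiv2 : ∀ x ∈ Set.Icc a0 1, HasDerivWithinAt u' (u'' x) (Set.Icc a0 1) x)
    (hu''cont : ContinuousOn u'' (Set.Icc a0 1))
    (hu'pos : ∀ x ∈ Set.Icc a0 1, 0 < u' x)
    (hu''neg : ∀ x ∈ Set.Icc a0 1, u'' x < 0)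
    (M : ℝ) (hM : IsGreatest ((fun a => |u'' a|) '' Set.Icc a0 1) M)
    (r Δ C Ik Iu aI : ℝ) (hr : 0 < r) (hΔ : 0 < Δ) (hC : 0 ≤ C)
    (hIk : 0 ≤ Ik) (hIu : 0 ≤ Iu) (haI : aI ∈ Set.Icc a0 1)
    (astar adag : ℝ) (hastar : astar ∈ Set.Icc a0 1) (hadag : adag ∈ Set.Icc a0 1)
    -- `a*` maximizes `f(x) = c₀ u(x) - C(a_I I_k + a* I_u)x` over `A`
    (hf : ∀ x ∈ Set.Icc a0 1,
      (1 - Real.exp (-(r*Δ))) * u x - C * (aI*Ik + astar*Iu) * x ≤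
      (1 - Real.exp (-(r*Δ))) * u astar - C * (aI*Ik + astar*Iu) * astar)
    -- `a†` maximizes `g(x) = c₀ u(x) - C(a_I I_k + x I_u)x` over `A`
    (hg : ∀ x ∈ Set.Icc a0 1,
      (1 - Real.exp (-(r*Δ))) * u x - C * (aI*Ik + x*Iu) * x ≤
      (1 - Real.exp (-(r*Δ))) * u adag - C * (aI*Ik + adag*Iu) * adag)
    -- and `a†` is the unique such maximizer
    (hg_unique : ∀ x ∈ Set.Icc a0 1,
      (∀ y ∈ Set.Icc a0 1,
        (1 - Real.exp (-(r*Δ))) * u y - C * (aI*Ik + y*Iu) * y ≤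
        (1 - Real.exp (-(r*Δ))) * u x - C * (aI*Ik + x*Iu) * x) → x = adag)
    -- interiority
    (h_int1 : a0 < adag) (h_int2 : astar < 1) :
    C * (2*adag - astar) * Iu ≤ (1 - Real.exp (-(r*Δ))) * M * (astar - adag) :=
  stmt_13_general a0 ha0 u u' u'' hderiv hderiv2 hu''neg M hM r Δ C Ik Iu aI hr hΔ hC hIu astar adag
    hastar hadag hf hg h_int1 h_int2
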